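/- (Eckart–Young–Mirsky, Frobenius norm) For A ∈ ℝ^{m×n} with singular values σ₁ ≥ σ₂ ≥ … and any r, the rank-r truncated SVD A_r satisfies ‖A − B‖_F² ≥ Σ_{j>r} σ_j² for every matrix B of rank at most r, with equality for B = A_r. -/

import Mathlib

open Matrix
open scoped RealInnerProductSpace

/-- Squared Frobenius norm of a real matrix. -/
def frobSq {m n : Type*} [Fintype m] [Fintype n] (A : Matrix m n ℝ) : ℝ :=
  ∑ i, ∑ j, (A i j) ^ 2

section EYMAux

lemma eym_inner_euc {n : ℕ} (x y : EuclideanSpace ℝ (Fin n)) : ⟪x, y⟫ = x ⬝ᵥ y := by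
  simp [PiLp.inner_apply, RCLike.inner_apply, dotProduct, mul_comm]

lemma eym_rearr {n r : ℕ} (hr : r < n) (μ q : Fin n → ℝ) (hμ : Antitone μ)
    (hq0 : ∀ j, 0 ≤ q j) (hq1 : ∀ j, q j ≤ 1) (hsum : ∑ j, q j = (n : ℝ) - r) :
    ∑ j ∈ Finset.univ.filter (fun j : Fin n => r ≤ (j : ℕ)), μ j ≤ ∑ j, μ j * q j := by
  set t := μ ⟨r, hr⟩ with ht
  have hcard : (Finset.univ.filter (fun j : Fin n => r ≤ (j : ℕ))).card = n - r := by
    have : Finset.univ.filter (fun j : Fin n => r ≤ (j : ℕ)) = Finset.Ici (⟨r, hr⟩ : Fin n) := by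
      ext j; simp [Fin.le_def]
    rw [this, Fin.card_Ici]
  have key : ∀ j : Fin n,
      t * (q j - (if r ≤ (j : ℕ) then 1 else 0)) ≤
        μ j * q j - (if r ≤ (j : ℕ) then μ j else 0) := by
    intro j
    by_cases h : r ≤ (j : ℕ)
    · have hle : μ j ≤ t := hμ (show (⟨r, hr⟩ : Fin n) ≤ j from h)
      have := hq1 j
      simp only [h, if_true]
      nlinarith
    · have hge : t ≤ μ j := hμ (show j ≤ (⟨r, hr⟩ : Fin n) from le_of_lt (not_le.mp h))
      have := hq0 j
      simp only [h, if_false]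
      nlinarith
  have hsum2 : ∑ j : Fin n, (if r ≤ (j : ℕ) then (1 : ℝ) else 0) = (n : ℝ) - r := by
    rw [← Finset.sum_filter]
    simp [hcard, Nat.cast_sub hr.le]
  have h1 : ∑ j : Fin n, t * (q j - (if r ≤ (j : ℕ) then 1 else 0)) = 0 := by
    rw [← Finset.mul_sum, Finset.sum_sub_distrib, hsum, hsum2]; ring
  have h2 := Finset.sum_le_sum (fun j (_ : j ∈ Finset.univ) => key j)
  rw [h1, Finset.sum_sub_distrib] at h2
  have h3 : ∑ j : Fin n, (if r ≤ (j : ℕ) then μ j else 0) =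
      ∑ j ∈ Finset.univ.filter (fun j : Fin n => r ≤ (j : ℕ)), μ j := by
    rw [← Finset.sum_filter]
  linarith [h2, h3 ▸ h2]

lemma eym_frobSq_onb {m n : ℕ} (C : Matrix (Fin m) (Fin n) ℝ)
    (b : OrthonormalBasis (Fin n) ℝ (EuclideanSpace ℝ (Fin n))) :
    frobSq C = ∑ j, ∑ i, ((C *ᵥ (b j)) i) ^ 2 := by
  have key : ∀ i : Fin m, ∑ k, (C i k) ^ 2 = ∑ j, ((C *ᵥ (b j)) i) ^ 2 := by
    intro i
    have h := b.sum_inner_mul_inner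
      (WithLp.toLp 2 (C i)) (WithLp.toLp 2 (C i))
    simp only [PiLp.inner_apply, RCLike.inner_apply, starRingEnd_apply, star_trivial, PiLp.toLp_apply] at h
    calc ∑ k, (C i k) ^ 2 = ∑ k, C i k * C i k := by simp [sq]
    _ = ∑ j, (∑ k, C i k * b j k) * (∑ k, b j k * C i k) := by
        rw [← h]; exact Finset.sum_congr rfl fun j _ => mul_comm _ _
    _ = ∑ j, ((C *ᵥ (b j)) i) ^ 2 := by
        refine Finset.sum_congr rfl fun j _ => ?_
        have : (∑ k, b j k * C i k) = ∑ k, C i k * b j k := by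
          refine Finset.sum_congr rfl fun k _ => mul_comm _ _
        rw [this, mulVec, dotProduct, sq]
  rw [frobSq, Finset.sum_congr rfl fun i _ => key i, Finset.sum_comm]

lemma eym_quad_eq {m n : ℕ} (A : Matrix (Fin m) (Fin n) ℝ) (hH : (Aᵀ * A).IsHermitian)
    (x : EuclideanSpace ℝ (Fin n)) :
    ∑ i, ((A *ᵥ x) i) ^ 2 =
      ∑ k, hH.eigenvalues k * (⟪x, hH.eigenvectorBasis k⟫) ^ 2 := by
  set M := Aᵀ * A with hM
  have hMT : Mᵀ = M := by
    have := hH.eq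
    rwa [Matrix.conjTranspose_eq_transpose_of_trivial] at this
  set z : EuclideanSpace ℝ (Fin n) := (WithLp.equiv 2 _).symm (M *ᵥ x) with hz
  have h1 : ∑ i, ((A *ᵥ x) i) ^ 2 = ⟪x, z⟫ := by
    rw [eym_inner_euc]
    rw [show (x ⬝ᵥ z) = x ⬝ᵥ (M *ᵥ x) from rfl]
    rw [hM, ← mulVec_mulVec, Matrix.dotProduct_mulVec x Aᵀ (A *ᵥ x),
      Matrix.vecMul_transpose]
    simp [dotProduct, sq, mul_comm]
  have h2 := (hH.eigenvectorBasis).sum_inner_mul_inner x z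
  have h3 : ∀ k, ⟪hH.eigenvectorBasis k, z⟫ = hH.eigenvalues k * ⟪x, hH.eigenvectorBasis k⟫ := by
    intro k
    rw [eym_inner_euc]
    have : (hH.eigenvectorBasis k : Fin n → ℝ) ⬝ᵥ z = (hH.eigenvectorBasis k) ⬝ᵥ (M *ᵥ x) := rfl
    rw [this, Matrix.dotProduct_mulVec, ← Matrix.mulVec_transpose, hMT]
    erw [hH.mulVec_eigenvectorBasis]
    rw [eym_inner_euc, smul_dotProduct, dotProduct_comm]
    simp [smul_eq_mul]
  rw [h1, ← h2]
  refine Finset.sum_congr rfl fun k _ => ?_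
  rw [h3 k]; ring

lemma eym_exists_onb_ext {n s : ℕ} (hs : s ≤ n)
    (u : Fin s → EuclideanSpace ℝ (Fin n)) (hu : Orthonormal ℝ u) :
    ∃ b : OrthonormalBasis (Fin n) ℝ (EuclideanSpace ℝ (Fin n)),
      ∀ j : Fin s, b (Fin.castLE hs j) = u j := by
  classical
  set v : Fin n → EuclideanSpace ℝ (Fin n) :=
    fun j => if h : (j : ℕ) < s then u ⟨j, h⟩ else 0 with hv
  set S : Set (Fin n) := {j | (j : ℕ) < s} with hS
  have hres : Orthonormal ℝ (S.restrict v) := by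
    have hg : Orthonormal ℝ (fun j : S => u ⟨(j : Fin n), j.2⟩) :=
      hu.comp (fun j : S => (⟨(j : Fin n), j.2⟩ : Fin s))
        (fun a b hab => by
          apply Subtype.ext; apply Fin.ext
          have := congrArg Fin.val hab
          simpa using this)
    convert hg using 1
    funext j
    simp only [Set.restrict_apply, hv]
    exact dif_pos j.2
  obtain ⟨b, hb⟩ := hres.exists_orthonormalBasis_extension_of_card_eq (by simp)
  refine ⟨b, fun j => ?_⟩
  have hmem : (Fin.castLE hs j : Fin n) ∈ S := by simpa [hS] using j.2
  rw [hb _ hmem]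
  simp only [hv]
  rw [dif_pos (show ((Fin.castLE hs j : Fin n) : ℕ) < s from j.2)]
  congr 1

lemma eym_sum_le_frobSq {m n s : ℕ} (C : Matrix (Fin m) (Fin n) ℝ) (hs : s ≤ n)
    (u : Fin s → EuclideanSpace ℝ (Fin n)) (hu : Orthonormal ℝ u) :
    ∑ j, ∑ i, ((C *ᵥ (u j)) i) ^ 2 ≤ frobSq C := by
  classical
  obtain ⟨b, hb⟩ := eym_exists_onb_ext hs u hu
  rw [eym_frobSq_onb C b]
  set F : EuclideanSpace ℝ (Fin n) → ℝ := fun x => ∑ i, ((C *ᵥ x) i) ^ 2 with hF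
  have heq : ∑ j, F (u j) =
      ∑ j ∈ Finset.univ.map ⟨Fin.castLE hs, Fin.castLE_injective hs⟩, F (b j) := by
    rw [Finset.sum_map]
    exact Finset.sum_congr rfl fun j _ => by simp [hb j]
  rw [heq]
  refine Finset.sum_le_sum_of_subset_of_nonneg (Finset.subset_univ _) ?_
  intro j _ _
  exact Finset.sum_nonneg fun i _ => sq_nonneg _

lemma eym_exists_ker_onb {m n r : ℕ} (B : Matrix (Fin m) (Fin n) ℝ) (hB : B.rank ≤ r)
    (hr : r ≤ n) :
    ∃ u : Fin (n - r) → EuclideanSpace ℝ (Fin n),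
      Orthonormal ℝ u ∧ ∀ j, B *ᵥ (u j) = 0 := by
  classical
  set f : EuclideanSpace ℝ (Fin n) →ₗ[ℝ] (Fin m → ℝ) :=
    B.mulVecLin ∘ₗ (WithLp.linearEquiv 2 ℝ (Fin n → ℝ)).toLinearMap with hf
  have hrange : LinearMap.range f = LinearMap.range B.mulVecLin := by
    rw [hf, LinearMap.range_comp, LinearEquiv.range, Submodule.map_top]
  have hrk : Module.finrank ℝ (LinearMap.range f) + Module.finrank ℝ (LinearMap.ker f) = n := by
    have := LinearMap.finrank_range_add_finrank_ker f
    rwa [finrank_euclideanSpace, Fintype.card_fin] at this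
  have hkerge : n - r ≤ Module.finrank ℝ (LinearMap.ker f) := by
    have : Module.finrank ℝ (LinearMap.range f) ≤ r := by
      rw [hrange]; exact hB
    omega
  set K := LinearMap.ker f with hK
  set bK := stdOrthonormalBasis ℝ K with hbK
  have hcard : n - r ≤ Module.finrank ℝ K := hkerge
  refine ⟨fun j => (bK (Fin.castLE hcard j) : EuclideanSpace ℝ (Fin n)), ?_, ?_⟩
  · have h1 : Orthonormal ℝ (fun i : Fin (Module.finrank ℝ K) =>
        (bK i : EuclideanSpace ℝ (Fin n))) := by
      rw [orthonormal_iff_ite]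
      intro i j
      rw [← Submodule.coe_inner]
      have := bK.orthonormal
      rw [orthonormal_iff_ite] at this
      exact this i j
    exact h1.comp _ (Fin.castLE_injective hcard)
  · intro j
    have hmem : (bK (Fin.castLE hcard j) : EuclideanSpace ℝ (Fin n)) ∈ K :=
      (bK (Fin.castLE hcard j)).2
    exact LinearMap.mem_ker.mp hmem

end EYMAux

/-- Eckart–Young–Mirsky theorem for the Frobenius norm: for any matrix `B` of rank
at most `r`, `‖A - B‖_F² ≥ ∑_{j > r} σ_j²`, and equality is attained by some rank-`r`
matrix (the rank-`r` truncated SVD `A_r`). Here `σ` lists the singular values of `A`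
in decreasing order. -/
theorem eckart_young_mirsky (m n r : ℕ) (A : Matrix (Fin m) (Fin n) ℝ)
    (σ : Fin n → ℝ) (hσmono : Antitone σ) (hσpos : ∀ j, 0 ≤ σ j)
    (hHerm : (Aᵀ * A).IsHermitian)
    (hσ : ∃ e : Equiv.Perm (Fin n), ∀ j, σ j ^ 2 = hHerm.eigenvalues (e j)) :
    (∀ B : Matrix (Fin m) (Fin n) ℝ, B.rank ≤ r →
        (∑ j ∈ Finset.univ.filter (fun j : Fin n => r ≤ (j : ℕ)), σ j ^ 2) ≤
          frobSq (A - B)) ∧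
      (∃ Ar : Matrix (Fin m) (Fin n) ℝ, Ar.rank ≤ r ∧
        frobSq (A - Ar) =
          ∑ j ∈ Finset.univ.filter (fun j : Fin n => r ≤ (j : ℕ)), σ j ^ 2) := by
  classical
  obtain ⟨e, he⟩ := hσ
  rcases lt_or_ge r n with hr | hr
  · constructor
    · -- lower bound
      intro B hB
      obtain ⟨u, hu, hu0⟩ := eym_exists_ker_onb B hB hr.le
      have hle := eym_sum_le_frobSq (A - B) (Nat.sub_le n r) u hu
      have heqsum : ∀ j, ∑ i, (((A - B) *ᵥ (u j)) i) ^ 2 = ∑ i, ((A *ᵥ (u j)) i) ^ 2 := by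
        intro j; rw [Matrix.sub_mulVec, hu0 j, sub_zero]
      set lam := hHerm.eigenvalues with hlam
      set w := hHerm.eigenvectorBasis with hw
      set p : Fin n → ℝ := fun k => ∑ j, (⟪u j, w k⟫) ^ 2 with hp
      have hquad : ∑ j, ∑ i, ((A *ᵥ (u j)) i) ^ 2 = ∑ k, lam k * p k := by
        calc ∑ j, ∑ i, ((A *ᵥ (u j)) i) ^ 2
            = ∑ j, ∑ k, lam k * (⟪u j, w k⟫) ^ 2 :=
              Finset.sum_congr rfl fun j _ => eym_quad_eq A hHerm (u j)
          _ = ∑ k, ∑ j, lam k * (⟪u j, w k⟫) ^ 2 := Finset.sum_comm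
          _ = ∑ k, lam k * p k := by
              refine Finset.sum_congr rfl fun k _ => ?_
              rw [hp, Finset.mul_sum]
      have hp0 : ∀ k, 0 ≤ p k := fun k => Finset.sum_nonneg fun j _ => sq_nonneg _
      have hp1 : ∀ k, p k ≤ 1 := by
        intro k
        have h := hu.sum_inner_products_le (w k) (s := Finset.univ)
        have hwk : ‖w k‖ = 1 := w.orthonormal.1 k
        rw [hwk] at h
        simpa [Real.norm_eq_abs, sq_abs] using h
      have hpsum : ∑ k, p k = (n : ℝ) - r := by
        have hone : ∀ j, ∑ k, (⟪u j, w k⟫) ^ 2 = 1 := by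
          intro j
          have h := w.sum_inner_mul_inner (u j) (u j)
          have hself : ⟪u j, u j⟫ = (1 : ℝ) := by
            rw [real_inner_self_eq_norm_sq, hu.1 j]; norm_num
          rw [hself] at h
          rw [← h]
          refine Finset.sum_congr rfl fun k _ => ?_
          rw [sq, real_inner_comm (u j) (w k)]
        calc ∑ k, p k = ∑ j : Fin (n - r), ∑ k, (⟪u j, w k⟫) ^ 2 := Finset.sum_comm
          _ = ∑ j : Fin (n - r), (1 : ℝ) := Finset.sum_congr rfl fun j _ => hone j
          _ = (n : ℝ) - r := by
              simp [Nat.cast_sub hr.le]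
      have hmono : Antitone (fun j : Fin n => σ j ^ 2) :=
        fun i j h => pow_le_pow_left₀ (hσpos j) (hσmono h) 2
      have hrearr := eym_rearr hr (fun j => σ j ^ 2) (fun j => p (e j)) hmono
        (fun j => hp0 (e j)) (fun j => hp1 (e j))
        (by rw [Equiv.sum_comp e p]; exact hpsum)
      have hfin : ∑ j : Fin n, σ j ^ 2 * p (e j) = ∑ k, lam k * p k := by
        rw [← Equiv.sum_comp e (fun k => lam k * p k)]
        exact Finset.sum_congr rfl fun j _ => by rw [he j]
      calc ∑ j ∈ Finset.univ.filter (fun j : Fin n => r ≤ (j : ℕ)), σ j ^ 2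
          ≤ ∑ j : Fin n, σ j ^ 2 * p (e j) := hrearr
        _ = ∑ k, lam k * p k := hfin
        _ = ∑ j, ∑ i, ((A *ᵥ (u j)) i) ^ 2 := hquad.symm
        _ = ∑ j, ∑ i, (((A - B) *ᵥ (u j)) i) ^ 2 :=
            (Finset.sum_congr rfl fun j _ => (heqsum j).symm)
        _ ≤ frobSq (A - B) := hle
    · -- equality
      set w := hHerm.eigenvectorBasis with hw
      set lam := hHerm.eigenvalues with hlam
      set C : Matrix (Fin n) (Fin r) ℝ := fun i j => w (e (Fin.castLE hr.le j)) i with hC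
      refine ⟨A * C * Cᵀ, ?_, ?_⟩
      · refine le_trans (Matrix.rank_mul_le_left (A * C) Cᵀ) ?_
        refine le_trans (Matrix.rank_le_card_width (A * C)) ?_
        simp
      · have hwdot : ∀ a b : Fin n, (w a : Fin n → ℝ) ⬝ᵥ (w b : Fin n → ℝ)
            = if a = b then 1 else 0 := by
          intro a b
          rw [← eym_inner_euc]
          exact orthonormal_iff_ite.mp w.orthonormal a b
        have hterm : ∀ k, ∑ i, (((A - A * C * Cᵀ) *ᵥ (w k)) i) ^ 2 =
            if ((e.symm k : Fin n) : ℕ) < r then 0 else lam k := by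
          intro k
          have hAr : (A * C * Cᵀ) *ᵥ (w k : Fin n → ℝ) = A *ᵥ (C *ᵥ (Cᵀ *ᵥ (w k))) := by
            rw [mulVec_mulVec, mulVec_mulVec]
          have hd : (Cᵀ *ᵥ (w k : Fin n → ℝ)) =
              fun j : Fin r => if e (Fin.castLE hr.le j) = k then 1 else 0 := by
            funext j
            have : (Cᵀ *ᵥ (w k : Fin n → ℝ)) j
                = (w (e (Fin.castLE hr.le j)) : Fin n → ℝ) ⬝ᵥ (w k : Fin n → ℝ) := by
              simp [mulVec, dotProduct, transpose_apply, hC]; rfl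
            rw [this, hwdot]
          by_cases h : ((e.symm k : Fin n) : ℕ) < r
          · have hCd : C *ᵥ (Cᵀ *ᵥ (w k : Fin n → ℝ)) = (w k : Fin n → ℝ) := by
              funext i
              rw [hd]
              have hcond : ∀ j : Fin r,
                  (e (Fin.castLE hr.le j) = k) ↔ (j = ⟨((e.symm k : Fin n) : ℕ), h⟩) := by
                intro j
                constructor
                · intro hh
                  have h2 : Fin.castLE hr.le j = e.symm k := by
                    rw [← hh, Equiv.symm_apply_apply]
                  apply Fin.ext
                  simpa using congrArg Fin.val h2
                · rintro rfl
                  have : Fin.castLE hr.le (⟨((e.symm k : Fin n) : ℕ), h⟩ : Fin r)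
                      = e.symm k := by
                    apply Fin.ext; simp
                  rw [this, Equiv.apply_symm_apply]
              have : (C *ᵥ (fun j : Fin r => if e (Fin.castLE hr.le j) = k then (1:ℝ) else 0)) i
                  = ∑ j : Fin r, C i j * (if j = (⟨((e.symm k : Fin n) : ℕ), h⟩ : Fin r) then (1:ℝ) else 0) := by
                rw [mulVec, dotProduct]
                exact Finset.sum_congr rfl fun j _ => by
                  rw [if_congr (hcond j) rfl rfl]
              rw [this]
              rw [Finset.sum_eq_single (⟨((e.symm k : Fin n) : ℕ), h⟩ : Fin r)]
              · have hek : e (Fin.castLE hr.le (⟨((e.symm k : Fin n) : ℕ), h⟩ : Fin r)) = k := by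
                  have : Fin.castLE hr.le (⟨((e.symm k : Fin n) : ℕ), h⟩ : Fin r) = e.symm k := by
                    apply Fin.ext; simp
                  rw [this, Equiv.apply_symm_apply]
                simp [hC, hek]
              · intro b _ hb; simp [hb]
              · intro hb; exact absurd (Finset.mem_univ _) hb
            rw [if_pos h]
            have : (A - A * C * Cᵀ) *ᵥ (w k : Fin n → ℝ) = 0 := by
              rw [Matrix.sub_mulVec, hAr, hCd, sub_self]
            rw [this]
            simp
          · have hd0 : (Cᵀ *ᵥ (w k : Fin n → ℝ)) = 0 := by
              funext j
              have hne : e (Fin.castLE hr.le j) ≠ k := by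
                intro hh
                have h2 : Fin.castLE hr.le j = e.symm k := by
                  rw [← hh, Equiv.symm_apply_apply]
                have : ((e.symm k : Fin n) : ℕ) < r := by
                  rw [← h2]; simpa using j.isLt
                exact h this
              rw [hd]
              simp [hne]
            have hAr0 : (A - A * C * Cᵀ) *ᵥ (w k : Fin n → ℝ) = A *ᵥ (w k : Fin n → ℝ) := by
              rw [Matrix.sub_mulVec, hAr, hd0]
              simp
            rw [if_neg h]
            calc ∑ i, (((A - A * C * Cᵀ) *ᵥ (w k)) i) ^ 2
                = ∑ i, ((A *ᵥ (w k : Fin n → ℝ)) i) ^ 2 := by rw [hAr0]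
              _ = ∑ l, lam l * (⟪(w k : EuclideanSpace ℝ (Fin n)), w l⟫) ^ 2 :=
                  eym_quad_eq A hHerm (w k)
              _ = lam k := by
                  have hil : ∀ l, (⟪(w k : EuclideanSpace ℝ (Fin n)), w l⟫ : ℝ)
                      = if k = l then 1 else 0 := fun l => orthonormal_iff_ite.mp w.orthonormal k l
                  rw [Finset.sum_congr rfl fun l _ => by rw [hil l]]
                  rw [Finset.sum_eq_single k]
                  · simp
                  · intro b _ hb
                    simp [Ne.symm hb]
                  · intro hk
                    exact absurd (Finset.mem_univ k) hk
        rw [eym_frobSq_onb _ w, Finset.sum_congr rfl fun k _ => hterm k]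
        have hflip : ∀ k : Fin n, (if ((e.symm k : Fin n) : ℕ) < r then (0:ℝ) else lam k)
            = (if r ≤ ((e.symm k : Fin n) : ℕ) then lam k else 0) := by
          intro k
          by_cases h : ((e.symm k : Fin n) : ℕ) < r
          · rw [if_pos h, if_neg (by omega)]
          · rw [if_neg h, if_pos (by omega)]
        rw [Finset.sum_congr rfl fun k _ => hflip k]
        rw [← Equiv.sum_comp e (fun k => if r ≤ ((e.symm k : Fin n) : ℕ) then lam k else 0)]
        have : ∀ j : Fin n, (if r ≤ ((e.symm (e j) : Fin n) : ℕ) then lam (e j) else 0)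
            = (if r ≤ (j : ℕ) then σ j ^ 2 else 0) := by
          intro j
          rw [Equiv.symm_apply_apply, he j]
        rw [Finset.sum_congr rfl fun j _ => this j, ← Finset.sum_filter]
  · -- r ≥ n
    have hfilter : Finset.univ.filter (fun j : Fin n => r ≤ (j : ℕ)) = ∅ := by
      refine Finset.filter_false_of_mem fun j _ => ?_
      have := j.isLt; omega
    constructor
    · intro B _
      rw [hfilter, Finset.sum_empty, frobSq]
      exact Finset.sum_nonneg fun i _ => Finset.sum_nonneg fun j _ => sq_nonneg _
    · exact ⟨A, le_trans (Matrix.rank_le_width A) hr, by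
        rw [sub_self, hfilter, Finset.sum_empty]; simp [frobSq]⟩
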